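/- Let P be a homothetic packing of n squares whose radii satisfy the weak generic condition. If either of the subgraphs ([n], E_x) or ([n], E_y) contains a cycle (n_1, …, n_k) with k ≤ n − 2, then k = 4 and the four squares S_{n_1}, S_{n_2}, S_{n_3}, S_{n_4} share a corner. -/

import Mathlib

open Finset Real

noncomputable section

/-- The standard square `[-1,1] × [-1,1]`. -/
def stdSquare : Set (ℝ × ℝ) := {q : ℝ × ℝ | -1 ≤ q.1 ∧ q.1 ≤ 1 ∧ -1 ≤ q.2 ∧ q.2 ≤ 1}

/-- The homothetic copy `r • S + p` of the standard square (radius `r`, centre `p`). -/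
def homSq (r : ℝ) (p : ℝ × ℝ) : Set (ℝ × ℝ) := (fun q => r • q + p) '' stdSquare

/-- A homothetic packing of `n` squares with radii `r` and centres `p`:
all radii are positive and the interiors of the squares are pairwise disjoint. -/
def IsSqPacking {n : ℕ} (r : Fin n → ℝ) (p : Fin n → ℝ × ℝ) : Prop :=
  (∀ i, 0 < r i) ∧
  ∀ i j, i ≠ j → interior (homSq (r i) (p i)) ∩ interior (homSq (r j) (p j)) = ∅

/-- Squares `i` and `j` are distinct and touch: an edge of the contact graph. -/
def SqContact {n : ℕ} (r : Fin n → ℝ) (p : Fin n → ℝ × ℝ) (i j : Fin n) : Prop :=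
  i ≠ j ∧ (homSq (r i) (p i) ∩ homSq (r j) (p j)).Nonempty

/-- The contact graph of a homothetic square packing. -/
def contactGraph {n : ℕ} (r : Fin n → ℝ) (p : Fin n → ℝ × ℝ) : SimpleGraph (Fin n) where
  Adj i j := SqContact r p i j
  symm := by
    constructor
    intro i j h
    refine ⟨h.1.symm, ?_⟩
    rw [Set.inter_comm]
    exact h.2
  loopless := ⟨fun i h => h.1 rfl⟩

/-- `{i,j}` is an x-direction contact: the squares touch and
`r i + r j = |x_i - x_j| ≥ |y_i - y_j|`. -/
def XContact {n : ℕ} (r : Fin n → ℝ) (p : Fin n → ℝ × ℝ) (i j : Fin n) : Prop :=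
  SqContact r p i j ∧ r i + r j = |(p i).1 - (p j).1| ∧
    |(p i).2 - (p j).2| ≤ |(p i).1 - (p j).1|

/-- `{i,j}` is a y-direction contact: the squares touch and
`r i + r j = |y_i - y_j| ≥ |x_i - x_j|`. -/
def YContact {n : ℕ} (r : Fin n → ℝ) (p : Fin n → ℝ × ℝ) (i j : Fin n) : Prop :=
  SqContact r p i j ∧ r i + r j = |(p i).2 - (p j).2| ∧
    |(p i).1 - (p j).1| ≤ |(p i).2 - (p j).2|

/-- The graph `([n], E_x)` of x-direction contacts. -/
def xGraph {n : ℕ} (r : Fin n → ℝ) (p : Fin n → ℝ × ℝ) : SimpleGraph (Fin n) where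
  Adj i j := XContact r p i j
  symm := by
    constructor
    intro i j h
    refine ⟨SimpleGraph.Adj.symm (G := contactGraph r p) h.1, ?_, ?_⟩
    · rw [abs_sub_comm, add_comm]; exact h.2.1
    · rw [abs_sub_comm ((p j).2), abs_sub_comm ((p j).1)]; exact h.2.2
  loopless := ⟨fun i h => h.1.1 rfl⟩

/-- The graph `([n], E_y)` of y-direction contacts. -/
def yGraph {n : ℕ} (r : Fin n → ℝ) (p : Fin n → ℝ × ℝ) : SimpleGraph (Fin n) where
  Adj i j := YContact r p i j
  symm := by
    constructor
    intro i j h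
    refine ⟨SimpleGraph.Adj.symm (G := contactGraph r p) h.1, ?_, ?_⟩
    · rw [abs_sub_comm, add_comm]; exact h.2.1
    · rw [abs_sub_comm ((p j).2), abs_sub_comm ((p j).1)]; exact h.2.2
  loopless := ⟨fun i h => h.1.1 rfl⟩

/-- Positive radii satisfy the weak generic condition if the only `σ : [n] → {-1,0,1}`
with at least 4 zeroes satisfying `Σ σ i * r i = 0` is the zero function. -/
def WeakGeneric {n : ℕ} (r : Fin n → ℝ) : Prop :=
  ∀ σ : Fin n → ℤ, (∀ i, σ i = -1 ∨ σ i = 0 ∨ σ i = 1) →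
    4 ≤ (Finset.univ.filter fun i => σ i = 0).card →
    (∑ i, (σ i : ℝ) * r i) = 0 → σ = 0

/-- `z` is a corner of the axis-parallel square with radius `r` and centre `c`. -/
def IsSqCorner (r : ℝ) (c z : ℝ × ℝ) : Prop := |z.1 - c.1| = r ∧ |z.2 - c.2| = r

/-- The four squares `i, j, k, l` share a corner: their common intersection is a single
point which is a corner of each of the four squares. -/
def ShareCorner {n : ℕ} (r : Fin n → ℝ) (p : Fin n → ℝ × ℝ) (i j k l : Fin n) : Prop :=
  ∃ z : ℝ × ℝ,
    homSq (r i) (p i) ∩ homSq (r j) (p j) ∩ homSq (r k) (p k) ∩ homSq (r l) (p l) = {z} ∧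
    IsSqCorner (r i) (p i) z ∧ IsSqCorner (r j) (p j) z ∧
    IsSqCorner (r k) (p k) z ∧ IsSqCorner (r l) (p l) z



/-! ### Auxiliary lemmas -/

lemma homSq_eq {r : ℝ} (hr : 0 < r) (p : ℝ × ℝ) :
    homSq r p = Set.Icc (p.1 - r) (p.1 + r) ×ˢ Set.Icc (p.2 - r) (p.2 + r) := by
  ext ⟨z1, z2⟩
  constructor
  · rintro ⟨⟨q1, q2⟩, ⟨h1, h2, h3, h4⟩, h⟩
    obtain ⟨e1, e2⟩ : r * q1 + p.1 = z1 ∧ r * q2 + p.2 = z2 := by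
      simpa [Prod.ext_iff] using h
    constructor <;> constructor <;> simp <;> nlinarith
  · rintro ⟨⟨h1, h2⟩, h3, h4⟩
    refine ⟨((z1 - p.1)/r, (z2 - p.2)/r), ⟨?_, ?_, ?_, ?_⟩, ?_⟩
    · simp only; rw [le_div_iff₀ hr]; simp at h1 ⊢; linarith
    · simp only; rw [div_le_iff₀ hr]; simp at h2 ⊢; linarith
    · simp only; rw [le_div_iff₀ hr]; simp at h3 ⊢; linarith
    · simp only; rw [div_le_iff₀ hr]; simp at h4 ⊢; linarith
    · simp only [Prod.smul_mk, smul_eq_mul, Prod.mk_add_mk, Prod.ext_iff]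
      constructor <;> field_simp <;> simp

lemma interior_homSq {r : ℝ} (hr : 0 < r) (p : ℝ × ℝ) :
    interior (homSq r p) = Set.Ioo (p.1 - r) (p.1 + r) ×ˢ Set.Ioo (p.2 - r) (p.2 + r) := by
  rw [homSq_eq hr, interior_prod_eq, interior_Icc, interior_Icc]

lemma mem_homSq {r : ℝ} (hr : 0 < r) {p z : ℝ × ℝ} :
    z ∈ homSq r p ↔ |z.1 - p.1| ≤ r ∧ |z.2 - p.2| ≤ r := by
  rw [homSq_eq hr, Set.mem_prod, Set.mem_Icc, Set.mem_Icc, abs_le, abs_le]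
  constructor <;> rintro ⟨⟨a, b⟩, c, d⟩ <;> refine ⟨⟨?_, ?_⟩, ?_, ?_⟩ <;> linarith

lemma mem_interior_homSq {r : ℝ} (hr : 0 < r) {p z : ℝ × ℝ} :
    z ∈ interior (homSq r p) ↔ |z.1 - p.1| < r ∧ |z.2 - p.2| < r := by
  rw [interior_homSq hr, Set.mem_prod, Set.mem_Ioo, Set.mem_Ioo, abs_lt, abs_lt]
  constructor <;> rintro ⟨⟨a, b⟩, c, d⟩ <;> refine ⟨⟨?_, ?_⟩, ?_, ?_⟩ <;> linarith

/-- k = 4 case, ordered version -/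
lemma four_corner_ord (R0 R1 R2 R3 Y0 Y1 Y2 Y3 : ℝ)
    (hR0 : 0 < R0) (hR1 : 0 < R1) (hR2 : 0 < R2) (hR3 : 0 < R3)
    (h01 : |Y0 - Y1| ≤ R0 + R1) (h12 : |Y1 - Y2| ≤ R1 + R2)
    (h23 : |Y2 - Y3| ≤ R2 + R3) (h30 : |Y3 - Y0| ≤ R3 + R0)
    (h13 : R1 + R3 ≤ |Y1 - Y3|)
    (hord : Y0 + R0 ≤ Y2 - R2) :
    ∃ t, |Y0 - t| = R0 ∧ |Y1 - t| = R1 ∧ |Y2 - t| = R2 ∧ |Y3 - t| = R3 ∧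
      (Y0 - t) * (Y2 - t) < 0 := by
  obtain ⟨a01, b01⟩ := abs_le.1 h01
  obtain ⟨a12, b12⟩ := abs_le.1 h12
  obtain ⟨a23, b23⟩ := abs_le.1 h23
  obtain ⟨a30, b30⟩ := abs_le.1 h30
  -- O1 and O3 both cover [Y0+R0, Y2-R2]
  have hO1l : Y1 - R1 ≤ Y0 + R0 := by linarith
  have hO1r : Y2 - R2 ≤ Y1 + R1 := by linarith
  have hO3l : Y3 - R3 ≤ Y0 + R0 := by linarith
  have hO3r : Y2 - R2 ≤ Y3 + R3 := by linarith
  have heq : Y0 + R0 = Y2 - R2 := by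
    rcases eq_or_lt_of_le hord with h | h
    · exact h
    · exfalso
      rcases le_abs.1 h13 with h' | h' <;> linarith
  set t := Y0 + R0 with ht
  have e0 : |Y0 - t| = R0 := by rw [ht]; rw [abs_of_nonpos (by linarith)]; ring
  have e2 : |Y2 - t| = R2 := by rw [abs_of_nonneg (by linarith)]; linarith
  have m1 : |Y1 - t| ≤ R1 := abs_le.2 ⟨by linarith, by linarith⟩
  have m3 : |Y3 - t| ≤ R3 := abs_le.2 ⟨by linarith, by linarith⟩
  have e1 : |Y1 - t| = R1 := by
    rcases eq_or_lt_of_le m1 with h | h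
    · exact h
    · exfalso
      have m3' : |t - Y3| ≤ R3 := by rwa [abs_sub_comm]
      have : |Y1 - Y3| < R1 + R3 := by
        calc |Y1 - Y3| ≤ |Y1 - t| + |t - Y3| := abs_sub_le _ _ _
        _ < R1 + R3 := by linarith
      linarith
  have e3 : |Y3 - t| = R3 := by
    rcases eq_or_lt_of_le m3 with h | h
    · exact h
    · exfalso
      have m3' : |t - Y3| < R3 := by rw [abs_sub_comm]; linarith
      have : |Y1 - Y3| < R1 + R3 := by
        calc |Y1 - Y3| ≤ |Y1 - t| + |t - Y3| := abs_sub_le _ _ _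
        _ < R1 + R3 := by linarith
      linarith
  exact ⟨t, e0, e1, e2, e3, by nlinarith⟩

lemma four_corner (R0 R1 R2 R3 Y0 Y1 Y2 Y3 : ℝ)
    (hR0 : 0 < R0) (hR1 : 0 < R1) (hR2 : 0 < R2) (hR3 : 0 < R3)
    (h01 : |Y0 - Y1| ≤ R0 + R1) (h12 : |Y1 - Y2| ≤ R1 + R2)
    (h23 : |Y2 - Y3| ≤ R2 + R3) (h30 : |Y3 - Y0| ≤ R3 + R0)
    (h02 : R0 + R2 ≤ |Y0 - Y2|) (h13 : R1 + R3 ≤ |Y1 - Y3|) :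
    ∃ t, |Y0 - t| = R0 ∧ |Y1 - t| = R1 ∧ |Y2 - t| = R2 ∧ |Y3 - t| = R3 ∧
      (Y0 - t) * (Y2 - t) < 0 := by
  rcases le_abs.1 h02 with h | h
  · -- Y2 + R2 ≤ Y0 - R0 : swap roles of 0 and 2
    obtain ⟨t, e2, e1, e0, e3, hprod⟩ :=
      four_corner_ord R2 R1 R0 R3 Y2 Y1 Y0 Y3 hR2 hR1 hR0 hR3
        (by rwa [abs_sub_comm, add_comm] at h12) (by rwa [abs_sub_comm, add_comm] at h01)
        (by rwa [abs_sub_comm, add_comm] at h30) (by rwa [abs_sub_comm, add_comm] at h23)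
        h13 (by linarith)
    exact ⟨t, e0, e1, e2, e3, by nlinarith⟩
  · exact four_corner_ord R0 R1 R2 R3 Y0 Y1 Y2 Y3 hR0 hR1 hR2 hR3 h01 h12 h23 h30 h13
      (by linarith)

/-- An interval O1 meeting the interval E_h = [yh-rh, yh+rh], which is contained in
O = [yO-rO, yO+rO] with O1, O interior-disjoint, must attach at an endpoint of E_h. -/
lemma side_touch (yh rh yO rO y1 r1 : ℝ)
    (hrh : 0 < rh) (hrO : 0 < rO) (hr1 : 0 < r1)
    (hOl : yO - rO ≤ yh - rh) (hOr : yh + rh ≤ yO + rO)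
    (h1h : |y1 - yh| ≤ r1 + rh)
    (d01 : rO + r1 ≤ |yO - y1|) :
    y1 + r1 = yh - rh ∨ y1 - r1 = yh + rh := by
  obtain ⟨a1, b1⟩ := abs_le.1 h1h
  have hu : yh - rh ≤ y1 + r1 := by linarith
  have hv : y1 - r1 ≤ yh + rh := by linarith
  by_contra hc
  push_neg at hc
  obtain ⟨hne1, hne2⟩ := hc
  have hu' : yh - rh < y1 + r1 := lt_of_le_of_ne hu (Ne.symm hne1)
  have hv' : y1 - r1 < yh + rh := lt_of_le_of_ne hv hne2
  set ξ := (max (y1 - r1) (yh - rh) + min (y1 + r1) (yh + rh)) / 2 with hξ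
  have A : y1 - r1 < min (y1 + r1) (yh + rh) := lt_min (by linarith) (by linarith)
  have B : yh - rh < min (y1 + r1) (yh + rh) := lt_min (by linarith) (by linarith)
  have hmm : max (y1 - r1) (yh - rh) < min (y1 + r1) (yh + rh) := max_lt A B
  have hl : max (y1 - r1) (yh - rh) < ξ := by rw [hξ]; linarith
  have hr : ξ < min (y1 + r1) (yh + rh) := by rw [hξ]; linarith
  have k1 : |y1 - ξ| < r1 := by
    rw [abs_lt]
    constructor
    · have := min_le_left (y1 + r1) (yh + rh); linarith
    · have := le_max_left (y1 - r1) (yh - rh); linarith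
  have kO : |yO - ξ| < rO := by
    rw [abs_lt]
    constructor
    · have := min_le_right (y1 + r1) (yh + rh); linarith
    · have := le_max_right (y1 - r1) (yh - rh); linarith
  have : |yO - y1| < rO + r1 := by
    calc |yO - y1| ≤ |yO - ξ| + |ξ - y1| := abs_sub_le _ _ _
    _ < rO + r1 := by rw [abs_sub_comm ξ y1]; linarith
  linarith

lemma radius_eq (yh rh yO rO y1 r1 y2 r2 : ℝ)
    (hrh : 0 < rh) (hrO : 0 < rO) (hr1 : 0 < r1) (hr2 : 0 < r2)
    (hOl : yO - rO ≤ yh - rh) (hOr : yh + rh ≤ yO + rO)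
    (h1h : |y1 - yh| ≤ r1 + rh) (h2h : |y2 - yh| ≤ r2 + rh)
    (d01 : rO + r1 ≤ |yO - y1|) (d02 : rO + r2 ≤ |yO - y2|)
    (d12 : r1 + r2 ≤ |y1 - y2|) :
    rO = rh := by
  have D1 := side_touch yh rh yO rO y1 r1 hrh hrO hr1 hOl hOr h1h d01
  have D2 := side_touch yh rh yO rO y2 r2 hrh hrO hr2 hOl hOr h2h d02
  have left_attach : ∀ y' r', 0 < r' → y' + r' = yh - rh → rO + r' ≤ |yO - y'| →
      yO - rO = yh - rh := by
    intro y' r' hr' he hd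
    rcases le_abs.1 hd with h | h
    · exact le_antisymm hOl (by linarith)
    · exfalso; linarith
  have right_attach : ∀ y' r', 0 < r' → y' - r' = yh + rh → rO + r' ≤ |yO - y'| →
      yO + rO = yh + rh := by
    intro y' r' hr' he hd
    rcases le_abs.1 hd with h | h
    · exfalso; linarith
    · exact le_antisymm (by linarith) hOr
  rcases D1 with h1 | h1 <;> rcases D2 with h2 | h2
  · exfalso; rcases le_abs.1 d12 with h | h <;> linarith
  · have e1 := left_attach y1 r1 hr1 h1 d01
    have e2 := right_attach y2 r2 hr2 h2 d02
    linarith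
  · have e1 := right_attach y1 r1 hr1 h1 d01
    have e2 := left_attach y2 r2 hr2 h2 d02
    linarith
  · exfalso; rcases le_abs.1 d12 with h | h <;> linarith

lemma zmod_reach {k : ℕ} [NeZero k] (i j : ZMod k) : ∃ t : ℕ, j = i + (t : ℕ) := by
  refine ⟨(j - i).val, ?_⟩
  rw [ZMod.natCast_rightInverse (j - i)]
  ring

lemma all_of_step {k : ℕ} [NeZero k] (P : ZMod k → Prop)
    (h : ∀ i, P i → P (i + 1)) {i : ZMod k} (hi : P i) (j : ZMod k) : P j := by
  obtain ⟨t, rfl⟩ := zmod_reach i j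
  induction t with
  | zero => simpa using hi
  | succ m ih =>
    have : ((m + 1 : ℕ) : ZMod k) = (m : ℕ) + 1 := by push_cast; ring
    rw [this, ← add_assoc]
    exact h _ ih

lemma const_of_step {k : ℕ} [NeZero k] {α : Sort*} (A : ZMod k → α)
    (h : ∀ i, A (i + 1) = A i) (i j : ZMod k) : A j = A i :=
  all_of_step (fun j => A j = A i) (fun m hm => by show A (m + 1) = A i; rw [h m]; exact hm) rfl j


set_option maxHeartbeats 1000000 in
theorem core_lemma (n : ℕ) (r : Fin n → ℝ) (x y : Fin n → ℝ)
    (hr : ∀ i, 0 < r i) (hWG : WeakGeneric r)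
    (hd : ∀ i j : Fin n, i ≠ j → |x i - x j| < r i + r j → r i + r j ≤ |y i - y j|)
    (k : ℕ) (hk : 3 ≤ k) (hkn : k + 2 ≤ n) (c : ZMod k → Fin n)
    (hinj : Function.Injective c)
    (hcyc : ∀ i : ZMod k, r (c i) + r (c (i+1)) = |x (c i) - x (c (i+1))| ∧
            |y (c i) - y (c (i+1))| ≤ |x (c i) - x (c (i+1))|) :
    k = 4 ∧ ∃ a t : ℝ,
      (∀ i : ZMod k, |x (c i) - a| = r (c i) ∧ |y (c i) - t| = r (c i)) ∧
      (x (c 0) - a) * (x (c 1) - a) < 0 ∧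
      (y (c 0) - t) * (y (c 2) - t) < 0 := by
  haveI : NeZero k := ⟨by omega⟩
  -- edge signs
  set ε : ZMod k → ℤ := fun i => if 0 ≤ x (c i) - x (c (i+1)) then 1 else -1 with hεdef
  have hεval : ∀ i, ε i = 1 ∨ ε i = -1 := by
    intro i
    by_cases h : 0 ≤ x (c i) - x (c (i+1))
    · left; simp only [hεdef, if_pos h]
    · right; simp only [hεdef, if_neg h]
  have hstep : ∀ i, ((ε i : ℝ)) * (r (c i) + r (c (i+1))) = x (c i) - x (c (i+1)) := by
    intro i
    obtain ⟨h1, _⟩ := hcyc i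
    by_cases h : 0 ≤ x (c i) - x (c (i+1))
    · simp only [hεdef, if_pos h]
      push_cast
      rw [one_mul, h1, abs_of_nonneg h]
    · simp only [hεdef, if_neg h]
      push_neg at h
      push_cast
      rw [h1, abs_of_neg h]
      ring
  have hstep' : ∀ i, ((ε i : ℝ)) * r (c i) + ((ε i : ℝ)) * r (c (i+1))
      = x (c i) - x (c (i+1)) := by
    intro i; rw [← mul_add]; exact hstep i
  -- telescoping
  have htel : ∑ i : ZMod k, x (c (i+1)) = ∑ i : ZMod k, x (c i) :=
    Fintype.sum_equiv (Equiv.addRight (1 : ZMod k)) _ _ (fun i => rfl)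
  have hS2 : ∑ i : ZMod k, ((ε i : ℝ)) * (r (c i) + r (c (i+1))) = 0 := by
    rw [Finset.sum_congr rfl (fun i _ => hstep i), Finset.sum_sub_distrib, htel, sub_self]
  -- vertex signs along the cycle
  set η : ZMod k → ℤ := fun i => if ε (i - 1) = ε i then ε i else 0 with hηdef
  have h2η : ∀ i, (η i) * 2 = ε (i - 1) + ε i := by
    intro i
    by_cases h : ε (i - 1) = ε i
    · simp only [hηdef, if_pos h]; rw [h]; ring
    · simp only [hηdef, if_neg h]
      rcases hεval (i-1) with h1 | h1 <;> rcases hεval i with h2 | h2 <;>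
        rw [h1, h2] at h ⊢ <;> first | (exfalso; exact h rfl) | ring
  have hηval : ∀ i, η i = -1 ∨ η i = 0 ∨ η i = 1 := by
    intro i
    by_cases h : ε (i - 1) = ε i
    · simp only [hηdef, if_pos h]
      rcases hεval i with h2 | h2 <;> rw [h2] <;> tauto
    · simp only [hηdef, if_neg h]; tauto
  -- the signing of the vertices
  set σ : Fin n → ℤ := fun j => if h : ∃ i, c i = j then η h.choose else 0 with hσdef
  have hσc : ∀ i, σ (c i) = η i := by
    intro i
    have hex : ∃ i', c i' = c i := ⟨i, rfl⟩
    simp only [hσdef, dif_pos hex]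
    congr 1
    exact hinj hex.choose_spec
  have hσ0 : ∀ j, (∀ i, c i ≠ j) → σ j = 0 := by
    intro j hj
    have hne : ¬∃ i, c i = j := by rintro ⟨i, hi⟩; exact hj i hi
    simp only [hσdef, dif_neg hne]
  have hσval : ∀ j, σ j = -1 ∨ σ j = 0 ∨ σ j = 1 := by
    intro j
    by_cases h : ∃ i, c i = j
    · obtain ⟨i, rfl⟩ := h; rw [hσc]; exact hηval i
    · push_neg at h; rw [hσ0 j h]; tauto
  -- sum of the signing is zero
  have hS : ∑ j, (σ j : ℝ) * r j = ∑ i : ZMod k, (η i : ℝ) * r (c i) := by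
    rw [← Finset.sum_subset (Finset.subset_univ (Finset.univ.image c))
      (fun j _ hj => by
        rw [hσ0 j (fun i hi => hj (Finset.mem_image.2 ⟨i, Finset.mem_univ i, hi⟩))]
        simp)]
    rw [Finset.sum_image (fun a _ b _ h => hinj h)]
    exact Finset.sum_congr rfl (fun i _ => by rw [hσc i])
  have hsum : ∑ i : ZMod k, (η i : ℝ) * r (c i) = 0 := by
    have hmul : (2:ℝ) * (∑ i : ZMod k, (η i : ℝ) * r (c i)) = 0 := by
      rw [Finset.mul_sum]
      have hc1 : ∀ i ∈ Finset.univ, (2:ℝ) * ((η i : ℝ) * r (c i))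
          = (ε (i-1) : ℝ) * r (c i) + (ε i : ℝ) * r (c i) := by
        intro i _
        have hq : ((η i : ℝ)) * 2 = ((ε (i-1) : ℝ)) + ((ε i : ℝ)) := by
          exact_mod_cast congrArg (fun z : ℤ => (z : ℝ)) (h2η i)
        calc (2:ℝ) * ((η i : ℝ) * r (c i)) = ((η i : ℝ) * 2) * r (c i) := by ring
        _ = ((ε (i-1) : ℝ) + (ε i : ℝ)) * r (c i) := by rw [hq]
        _ = (ε (i-1) : ℝ) * r (c i) + (ε i : ℝ) * r (c i) := by ring
      rw [Finset.sum_congr rfl hc1, Finset.sum_add_distrib]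
      have hre : ∑ i : ZMod k, (ε (i-1) : ℝ) * r (c i)
          = ∑ i : ZMod k, (ε i : ℝ) * r (c (i+1)) := by
        refine (Fintype.sum_equiv (Equiv.addRight (1 : ZMod k))
          (fun i => (ε i : ℝ) * r (c (i+1))) (fun j => (ε (j-1) : ℝ) * r (c j))
          (fun i => ?_)).symm
        show (ε i : ℝ) * r (c (i+1)) = (ε (i + 1 - 1) : ℝ) * r (c (i+1))
        rw [add_sub_cancel_right]
      rw [hre, ← Finset.sum_add_distrib]
      have hcg : ∀ i ∈ Finset.univ, ((ε i:ℝ)) * r (c (i+1)) + ((ε i:ℝ)) * r (c i)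
          = x (c i) - x (c (i+1)) := fun i _ => by rw [add_comm]; exact hstep' i
      rw [Finset.sum_congr rfl hcg, Finset.sum_sub_distrib, htel, sub_self]
    linarith
  -- both signs occur on edges
  have hpos : (0:ℝ) < ∑ i : ZMod k, (r (c i) + r (c (i+1))) := by
    apply Finset.sum_pos (fun i _ => by have := hr (c i); have := hr (c (i+1)); linarith)
    exact Finset.univ_nonempty
  have hex1 : ∃ i, ε i = 1 := by
    by_contra h
    push_neg at h
    have hall : ∀ i, ε i = -1 := fun i => (hεval i).resolve_left (h i)
    have he : ∑ i : ZMod k, ((ε i:ℝ)) * (r (c i) + r (c (i+1)))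
        = ∑ i : ZMod k, -(r (c i) + r (c (i+1))) :=
      Finset.sum_congr rfl (fun i _ => by rw [hall i]; push_cast; ring)
    rw [he, Finset.sum_neg_distrib] at hS2
    linarith
  have hex2 : ∃ i, ε i = -1 := by
    by_contra h
    push_neg at h
    have hall : ∀ i, ε i = 1 := fun i => (hεval i).resolve_right (h i)
    have he : ∑ i : ZMod k, ((ε i:ℝ)) * (r (c i) + r (c (i+1)))
        = ∑ i : ZMod k, (r (c i) + r (c (i+1))) :=
      Finset.sum_congr rfl (fun i _ => by rw [hall i]; push_cast; ring)
    rw [he] at hS2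
    linarith
  -- sign changes in both directions
  have hs1 : ∃ s, ε s = 1 ∧ ε (s + 1) = -1 := by
    by_contra h
    push_neg at h
    have hstep1 : ∀ i, ε i = 1 → ε (i + 1) = 1 := by
      intro i hi
      rcases hεval (i + 1) with h' | h'
      · exact h'
      · exact absurd h' (h i hi)
    obtain ⟨i1, hi1⟩ := hex1
    obtain ⟨i2, hi2⟩ := hex2
    have : ε i2 = 1 := all_of_step (fun i => ε i = 1) hstep1 hi1 i2
    omega
  have hs2 : ∃ s, ε s = -1 ∧ ε (s + 1) = 1 := by
    by_contra h
    push_neg at h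
    have hstep1 : ∀ i, ε i = -1 → ε (i + 1) = -1 := by
      intro i hi
      rcases hεval (i + 1) with h' | h'
      · exact absurd h' (h i hi)
      · exact h'
    obtain ⟨i1, hi1⟩ := hex1
    obtain ⟨i2, hi2⟩ := hex2
    have : ε i1 = -1 := all_of_step (fun i => ε i = -1) hstep1 hi2 i1
    omega
  obtain ⟨s1, hs11, hs12⟩ := hs1
  obtain ⟨s2, hs21, hs22⟩ := hs2
  have hη1 : η (s1 + 1) = 0 := by
    simp only [hηdef, add_sub_cancel_right]
    rw [if_neg (by omega)]
  have hη2 : η (s2 + 1) = 0 := by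
    simp only [hηdef, add_sub_cancel_right]
    rw [if_neg (by omega)]
  have hs1s2 : s1 + 1 ≠ s2 + 1 := by
    intro h
    have h' : s1 = s2 := add_right_cancel h
    rw [h'] at hs11
    omega
  -- at least four zeroes
  have hcard4 : 4 ≤ (Finset.univ.filter fun j => σ j = 0).card := by
    have him : (Finset.univ.image c).card = k := by
      rw [Finset.card_image_of_injective _ hinj, Finset.card_univ, ZMod.card]
    have hcompl : 1 < (Finset.univ \ Finset.univ.image c).card := by
      rw [Finset.card_sdiff_of_subset (Finset.subset_univ _), Finset.card_univ, Fintype.card_fin, him]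
      omega
    obtain ⟨a, ha, b, hb, hab⟩ := Finset.one_lt_card.1 hcompl
    have ha' : ∀ i, c i ≠ a := by
      intro i hi
      exact (Finset.mem_sdiff.1 ha).2 (Finset.mem_image.2 ⟨i, Finset.mem_univ i, hi⟩)
    have hb' : ∀ i, c i ≠ b := by
      intro i hi
      exact (Finset.mem_sdiff.1 hb).2 (Finset.mem_image.2 ⟨i, Finset.mem_univ i, hi⟩)
    have hca : c (s1+1) ≠ a := ha' _
    have hcb : c (s1+1) ≠ b := hb' _
    have hca2 : c (s2+1) ≠ a := ha' _
    have hcb2 : c (s2+1) ≠ b := hb' _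
    have hcc : c (s1+1) ≠ c (s2+1) := fun h => hs1s2 (hinj h)
    have hsub : ({c (s1+1), c (s2+1), a, b} : Finset (Fin n))
        ⊆ Finset.univ.filter fun j => σ j = 0 := by
      intro u hu
      simp only [Finset.mem_insert, Finset.mem_singleton] at hu
      rcases hu with rfl | rfl | rfl | rfl
      · exact Finset.mem_filter.2 ⟨Finset.mem_univ _, by rw [hσc]; exact hη1⟩
      · exact Finset.mem_filter.2 ⟨Finset.mem_univ _, by rw [hσc]; exact hη2⟩
      · exact Finset.mem_filter.2 ⟨Finset.mem_univ _, hσ0 _ ha'⟩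
      · exact Finset.mem_filter.2 ⟨Finset.mem_univ _, hσ0 _ hb'⟩
    have hc4 : ({c (s1+1), c (s2+1), a, b} : Finset (Fin n)).card = 4 := by
      rw [Finset.card_insert_of_notMem (by simp [hcc, hca, hcb]),
        Finset.card_insert_of_notMem (by simp [hca2, hcb2]),
        Finset.card_insert_of_notMem (by simp [hab]), Finset.card_singleton]
    calc 4 = ({c (s1+1), c (s2+1), a, b} : Finset (Fin n)).card := hc4.symm
    _ ≤ _ := Finset.card_le_card hsub
  -- apply the weak generic condition
  have hσzero : σ = 0 := hWG σ hσval hcard4 (by rw [hS]; exact hsum)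
  have halt : ∀ i, ε (i + 1) = -ε i := by
    intro i
    have h0 : η (i + 1) = 0 := by
      have := congrFun hσzero (c (i + 1))
      rw [hσc] at this
      simpa using this
    by_cases h : ε (i + 1 - 1) = ε (i + 1)
    · exfalso
      simp only [hηdef, if_pos h] at h0
      rcases hεval (i+1) with h' | h' <;> omega
    · rw [add_sub_cancel_right] at h
      rcases hεval i with h1 | h1 <;> rcases hεval (i+1) with h2 | h2 <;> omega
  have heps2 : ∀ i, ε (i + 2) = ε i := by
    intro i
    have h1 := halt i
    have h2 := halt (i + 1)
    rw [show i + 2 = i + 1 + 1 by ring, h2, h1]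
    ring
  -- k is even
  have hkeven : Even k := by
    have hpow : ∀ t : ℕ, ε ((t : ℕ) : ZMod k) = (-1)^t * ε 0 := by
      intro t
      induction t with
      | zero => simp
      | succ m ih =>
        have hc : ((m + 1 : ℕ) : ZMod k) = ((m : ℕ) : ZMod k) + 1 := by push_cast; ring
        rw [hc, halt, ih]
        ring
    have h := hpow k
    rw [ZMod.natCast_self] at h
    by_contra ho
    rw [Nat.not_even_iff_odd] at ho
    rw [Odd.neg_one_pow ho] at h
    rcases hεval 0 with h' | h' <;> omega
  -- all contacts on a common vertical line
  have hconst : ∀ i, x (c i) - ((ε i : ℝ)) * r (c i)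
      = x (c 0) - ((ε 0 : ℝ)) * r (c 0) := by
    intro i
    refine const_of_step (fun i => x (c i) - ((ε i : ℝ)) * r (c i)) ?_ 0 i
    intro i
    show x (c (i+1)) - ((ε (i+1) : ℝ)) * r (c (i+1)) = x (c i) - ((ε i : ℝ)) * r (c i)
    rw [halt i]
    push_cast
    have := hstep' i
    linarith
  set a0 : ℝ := x (c 0) - ((ε 0 : ℝ)) * r (c 0) with ha0
  -- same-parity squares have interior-disjoint y-intervals
  have Hsame : ∀ i j, i ≠ j → ε i = ε j → r (c i) + r (c j) ≤ |y (c i) - y (c j)| := by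
    intro i j hij hpar
    apply hd _ _ (fun h => hij (hinj h))
    have hi := hconst i
    have hj := hconst j
    have hxij : x (c i) - x (c j) = ((ε i : ℝ)) * r (c i) - ((ε j : ℝ)) * r (c j) := by
      linarith
    rw [hxij, hpar, abs_lt]
    have hri := hr (c i)
    have hrj := hr (c j)
    rcases hεval j with h' | h' <;> rw [h'] <;> push_cast <;>
      constructor <;> nlinarith
  have hadj : ∀ i, |y (c i) - y (c (i+1))| ≤ r (c i) + r (c (i+1)) :=
    fun i => le_of_le_of_eq (hcyc i).2 (hcyc i).1.symm
  clear hεdef hηdef hσdef ha0 hS hsum hS2 htel hstep hstep' hσc hσ0 hσval hσzero hη1 hη2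
  clear_value ε η σ a0
  -- a pair of equal radii contradicts weak genericity
  have hfinal : 6 ≤ k → ∀ i j : ZMod k, i ≠ j → r (c i) = r (c j) → False := by
    intro hk6 i j hij hreq
    set τ : Fin n → ℤ := fun u => if u = c i then 1 else if u = c j then -1 else 0 with hτdef
    have hcij : c i ≠ c j := fun h => hij (hinj h)
    have hτval : ∀ u, τ u = -1 ∨ τ u = 0 ∨ τ u = 1 := by
      intro u
      simp only [hτdef]
      split_ifs <;> tauto
    have hτcard : 4 ≤ (Finset.univ.filter fun u => τ u = 0).card := by
      have hsub : Finset.univ \ ({c i, c j} : Finset (Fin n))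
          ⊆ Finset.univ.filter fun u => τ u = 0 := by
        intro u hu
        rw [Finset.mem_sdiff] at hu
        simp only [Finset.mem_insert, Finset.mem_singleton, not_or] at hu
        obtain ⟨-, hu1, hu2⟩ := hu
        exact Finset.mem_filter.2 ⟨Finset.mem_univ _,
          by simp only [hτdef]; rw [if_neg hu1, if_neg hu2]⟩
      have hcard : (Finset.univ \ ({c i, c j} : Finset (Fin n))).card = n - 2 := by
        rw [Finset.card_sdiff_of_subset (Finset.subset_univ _), Finset.card_univ, Fintype.card_fin,
          Finset.card_insert_of_notMem (by simp [hcij]), Finset.card_singleton]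
      have := Finset.card_le_card hsub
      omega
    have hτsum : ∑ u, (τ u : ℝ) * r u = 0 := by
      have hz : ∀ u ∈ Finset.univ, u ∉ ({c i, c j} : Finset (Fin n)) → (τ u : ℝ) * r u = 0 := by
        intro u _ hu
        simp only [Finset.mem_insert, Finset.mem_singleton, not_or] at hu
        simp only [hτdef]
        rw [if_neg hu.1, if_neg hu.2]
        push_cast
        ring
      rw [← Finset.sum_subset (Finset.subset_univ _) hz, Finset.sum_pair hcij]
      have h1 : τ (c i) = 1 := by simp only [hτdef]; simp
      have h2 : τ (c j) = -1 := by
        simp only [hτdef]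
        rw [if_neg (Ne.symm hcij)]
        simp
      rw [h1, h2, hreq]
      push_cast
      ring
    have hτ0 := hWG τ hτval hτcard hτsum
    have h1 : τ (c i) = 1 := by simp only [hτdef]; simp
    rw [hτ0] at h1
    simp at h1
  by_cases h6 : 6 ≤ k
  · -- long cycles are impossible
    exfalso
    have hdiff : ∀ (u : ZMod k) (d : ℕ), 0 < d → d < k → u ≠ u + (d : ℕ) := by
      intro u d hd1 hd2 heq
      have h0 : ((d : ℕ) : ZMod k) = 0 := (left_eq_add.1 heq)
      rw [ZMod.natCast_eq_zero_iff] at h0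
      exact absurd (Nat.le_of_dvd hd1 h0) (by omega)
    have hne' : ∀ (u v : ZMod k) (d : ℕ), 0 < d → d < k → v = u + (d : ℕ) → u ≠ v := by
      intro u v d h1 h2 he h
      exact hdiff u d h1 h2 (h.trans he)
    obtain ⟨s, hs, hsmax⟩ := Finset.exists_max_image
      (Finset.univ.filter fun i => ε i = ε 0) (fun i => y (c i) + r (c i))
      ⟨0, by simp⟩
    rw [Finset.mem_filter] at hs
    have hs0 : ε s = ε 0 := hs.2
    have hpA : ε (s - 2) = ε 0 := by
      have h := heps2 (s - 2)
      rw [show s - 2 + 2 = s by ring] at h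
      rw [← h]
      exact hs0
    have hpB : ε (s + 2) = ε 0 := (heps2 s).trans hs0
    have hodd1 : ε (s + 1) = ε (s - 1) := by
      have h := heps2 (s - 1)
      rwa [show s - 1 + 2 = s + 1 by ring] at h
    have hodd2 : ε (s + 3) = ε (s + 1) := by
      have h := heps2 (s + 1)
      rwa [show s + 1 + 2 = s + 3 by ring] at h
    have hodd3 : ε (s - 3) = ε (s - 1) := by
      have h := heps2 (s - 3)
      rw [show s - 3 + 2 = s - 1 by ring] at h
      exact h.symm
    have hmax : ∀ j, ε j = ε 0 → j ≠ s → y (c j) + r (c j) ≤ y (c s) - r (c s) := by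
      intro j hpar hnej
      have hv := hsmax j (Finset.mem_filter.2 ⟨Finset.mem_univ _, hpar⟩)
      have hdisj := Hsame j s hnej (hpar.trans hs0.symm)
      rcases le_abs.1 hdisj with h | h
      · exfalso
        have := hr (c j)
        linarith
      · linarith
    -- distinctness of the relevant indices
    have hAs : s - 2 ≠ s := hne' (s-2) s 2 (by norm_num) (by omega) (by push_cast; ring)
    have hBs : s + 2 ≠ s := (hne' s (s+2) 2 (by norm_num) (by omega) (by push_cast; ring)).symm
    have hAB : s - 2 ≠ s + 2 := hne' (s-2) (s+2) 4 (by norm_num) (by omega) (by push_cast; ring)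
    have hn1 : s - 1 ≠ s + 1 := hne' (s-1) (s+1) 2 (by norm_num) (by omega) (by push_cast; ring)
    have hn2 : s - 1 ≠ s + 3 := hne' (s-1) (s+3) 4 (by norm_num) (by omega) (by push_cast; ring)
    have hn3 : s + 1 ≠ s + 3 := hne' (s+1) (s+3) 2 (by norm_num) (by omega) (by push_cast; ring)
    have hn4 : s - 3 ≠ s - 1 := hne' (s-3) (s-1) 2 (by norm_num) (by omega) (by push_cast; ring)
    have hn5 : s - 3 ≠ s + 1 := hne' (s-3) (s+1) 4 (by norm_num) (by omega) (by push_cast; ring)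
    have hn6 : s - 1 ≠ s + 2 := hne' (s-1) (s+2) 3 (by norm_num) (by omega) (by push_cast; ring)
    have hn7 : s - 2 ≠ s + 1 := hne' (s-2) (s+1) 3 (by norm_num) (by omega) (by push_cast; ring)
    rcases le_abs.1 (Hsame (s-2) (s+2) hAB (hpA.trans hpB.symm)) with hord | hord
    · -- y (c (s-2)) is above y (c (s+2)) : middle interval is s-2, long odd is s+1
      have hOB := hadj (s + 1)
      rw [show s + 1 + 1 = s + 2 by ring] at hOB
      have hOs := hadj s
      have h1A := hadj (s - 2)
      rw [show s - 2 + 1 = s - 1 by ring] at h1A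
      have h2A := hadj (s - 3)
      rw [show s - 3 + 1 = s - 2 by ring] at h2A
      obtain ⟨b1, b2⟩ := abs_le.1 hOB
      obtain ⟨b3, b4⟩ := abs_le.1 hOs
      obtain ⟨b5, b6⟩ := abs_le.1 h1A
      have hmA := hmax (s - 2) hpA hAs
      have heq := radius_eq (y (c (s-2))) (r (c (s-2))) (y (c (s+1))) (r (c (s+1)))
        (y (c (s-1))) (r (c (s-1))) (y (c (s-3))) (r (c (s-3)))
        (hr _) (hr _) (hr _) (hr _)
        (by linarith) (by linarith)
        (by rw [abs_sub_comm] at h1A; linarith [abs_le.1 h1A, h1A])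
        h2A
        (Hsame (s+1) (s-1) hn1.symm (hodd1))
        (Hsame (s+1) (s-3) hn5.symm (hodd1.trans hodd3.symm))
        (Hsame (s-1) (s-3) hn4.symm (hodd3.symm))
      exact hfinal h6 (s+1) (s-2) hn7.symm heq
    · -- y (c (s+2)) is above y (c (s-2)) : middle interval is s+2, long odd is s-1
      have hOA := hadj (s - 2)
      rw [show s - 2 + 1 = s - 1 by ring] at hOA
      have hOs := hadj (s - 1)
      rw [show s - 1 + 1 = s by ring] at hOs
      have h1B := hadj (s + 1)
      rw [show s + 1 + 1 = s + 2 by ring] at h1B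
      have h2B := hadj (s + 2)
      rw [show s + 2 + 1 = s + 3 by ring] at h2B
      obtain ⟨b1, b2⟩ := abs_le.1 hOA
      obtain ⟨b3, b4⟩ := abs_le.1 hOs
      have hmB := hmax (s + 2) hpB hBs
      have heq := radius_eq (y (c (s+2))) (r (c (s+2))) (y (c (s-1))) (r (c (s-1)))
        (y (c (s+1))) (r (c (s+1))) (y (c (s+3))) (r (c (s+3)))
        (hr _) (hr _) (hr _) (hr _)
        (by linarith) (by linarith)
        h1B
        (by rw [abs_sub_comm] at h2B; linarith [abs_le.1 h2B])
        (Hsame (s-1) (s+1) hn1 (hodd1.symm))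
        (Hsame (s-1) (s+3) hn2 (hodd2.trans hodd1).symm)
        (Hsame (s+1) (s+3) hn3 (hodd2.symm))
      exact hfinal h6 (s-1) (s+2) hn6 heq
  · -- k = 4
    have hk4 : k = 4 := by
      obtain ⟨m, hm⟩ := hkeven
      omega
    subst hk4
    have e01 : (0 : ZMod 4) + 1 = 1 := by decide
    have e12 : (1 : ZMod 4) + 1 = 2 := by decide
    have e23 : (2 : ZMod 4) + 1 = 3 := by decide
    have e30 : (3 : ZMod 4) + 1 = 0 := by decide
    have hε2 : ε 2 = ε 0 := by
      have h := heps2 0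
      rwa [show (0 : ZMod 4) + 2 = 2 by decide] at h
    have hε3 : ε 3 = ε 1 := by
      have h := heps2 1
      rwa [show (1 : ZMod 4) + 2 = 3 by decide] at h
    have hε1 : ε 1 = -ε 0 := by
      have h := halt 0
      rwa [e01] at h
    have h01 := hadj 0; rw [e01] at h01
    have h12 := hadj 1; rw [e12] at h12
    have h23 := hadj 2; rw [e23] at h23
    have h30 := hadj 3; rw [e30] at h30
    have h02 := Hsame 0 2 (by decide) hε2.symm
    have h13 := Hsame 1 3 (by decide) hε3.symm
    obtain ⟨t, f0, f1, f2, f3, hprod⟩ := four_corner (r (c 0)) (r (c 1)) (r (c 2)) (r (c 3))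
      (y (c 0)) (y (c 1)) (y (c 2)) (y (c 3)) (hr _) (hr _) (hr _) (hr _)
      h01 h12 h23 h30 h02 h13
    refine ⟨rfl, a0, t, ?_, ?_, hprod⟩
    · intro i
      constructor
      · have h := hconst i
        rcases hεval i with h' | h' <;> rw [h'] at h <;> push_cast at h
        · rw [show x (c i) - a0 = r (c i) by linarith]
          exact abs_of_pos (hr _)
        · rw [show x (c i) - a0 = -r (c i) by linarith, abs_neg]
          exact abs_of_pos (hr _)
      · have hall : ∀ j : ZMod 4, j = 0 ∨ j = 1 ∨ j = 2 ∨ j = 3 := by decide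
        rcases hall i with rfl | rfl | rfl | rfl
        exacts [f0, f1, f2, f3]
    · have h0 := hconst 0
      have h1 := hconst 1
      rw [hε1] at h1
      have hr0 := hr (c 0)
      have hr1 := hr (c 1)
      rcases hεval 0 with h' | h'
      · rw [h'] at h0 h1
        push_cast at h0 h1
        have g0 : x (c 0) - a0 = r (c 0) := by linarith
        have g1 : x (c 1) - a0 = -r (c 1) := by linarith
        rw [g0, g1]
        nlinarith
      · rw [h'] at h0 h1
        push_cast at h0 h1
        have g0 : x (c 0) - a0 = -r (c 0) := by linarith
        have g1 : x (c 1) - a0 = r (c 1) := by linarith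
        rw [g0, g1]
        nlinarith

lemma packing_sep {n : ℕ} (r : Fin n → ℝ) (p : Fin n → ℝ × ℝ) (hr : ∀ i, 0 < r i)
    (hdisj : ∀ i j, i ≠ j → interior (homSq (r i) (p i)) ∩ interior (homSq (r j) (p j)) = ∅)
    (i j : Fin n) (hij : i ≠ j) :
    r i + r j ≤ |(p i).1 - (p j).1| ∨ r i + r j ≤ |(p i).2 - (p j).2| := by
  by_contra hc
  push_neg at hc
  obtain ⟨hx, hy⟩ := hc
  obtain ⟨hx1, hx2⟩ := abs_lt.1 hx
  obtain ⟨hy1, hy2⟩ := abs_lt.1 hy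
  set mx := (max ((p i).1 - r i) ((p j).1 - r j) + min ((p i).1 + r i) ((p j).1 + r j)) / 2
    with hmx
  set my := (max ((p i).2 - r i) ((p j).2 - r j) + min ((p i).2 + r i) ((p j).2 + r j)) / 2
    with hmy
  have hri := hr i
  have hrj := hr j
  have hxm : max ((p i).1 - r i) ((p j).1 - r j) < min ((p i).1 + r i) ((p j).1 + r j) :=
    max_lt (lt_min (by linarith) (by linarith)) (lt_min (by linarith) (by linarith))
  have hym : max ((p i).2 - r i) ((p j).2 - r j) < min ((p i).2 + r i) ((p j).2 + r j) :=
    max_lt (lt_min (by linarith) (by linarith)) (lt_min (by linarith) (by linarith))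
  have hxl := le_max_left ((p i).1 - r i) ((p j).1 - r j)
  have hxr := le_max_right ((p i).1 - r i) ((p j).1 - r j)
  have hxl' := min_le_left ((p i).1 + r i) ((p j).1 + r j)
  have hxr' := min_le_right ((p i).1 + r i) ((p j).1 + r j)
  have hyl := le_max_left ((p i).2 - r i) ((p j).2 - r j)
  have hyr := le_max_right ((p i).2 - r i) ((p j).2 - r j)
  have hyl' := min_le_left ((p i).2 + r i) ((p j).2 + r j)
  have hyr' := min_le_right ((p i).2 + r i) ((p j).2 + r j)
  have hzi : (mx, my) ∈ interior (homSq (r i) (p i)) := by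
    rw [mem_interior_homSq (hr i)]
    constructor <;> simp only [hmx, hmy] <;> rw [abs_lt] <;> constructor <;> linarith
  have hzj : (mx, my) ∈ interior (homSq (r j) (p j)) := by
    rw [mem_interior_homSq (hr j)]
    constructor <;> simp only [hmx, hmy] <;> rw [abs_lt] <;> constructor <;> linarith
  exact Set.eq_empty_iff_forall_notMem.1 (hdisj i j hij) (mx, my) ⟨hzi, hzj⟩

set_option maxHeartbeats 2000000 in
lemma assemble {n : ℕ} (r : Fin n → ℝ) (p : Fin n → ℝ × ℝ) (hr : ∀ i, 0 < r i)
    (i0 i1 i2 i3 u v u' v' : Fin n) (a t : ℝ)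
    (hc0 : |(p i0).1 - a| = r i0 ∧ |(p i0).2 - t| = r i0)
    (hc1 : |(p i1).1 - a| = r i1 ∧ |(p i1).2 - t| = r i1)
    (hc2 : |(p i2).1 - a| = r i2 ∧ |(p i2).2 - t| = r i2)
    (hc3 : |(p i3).1 - a| = r i3 ∧ |(p i3).2 - t| = r i3)
    (hu : u = i0 ∨ u = i1 ∨ u = i2 ∨ u = i3)
    (hv : v = i0 ∨ v = i1 ∨ v = i2 ∨ v = i3)
    (hu' : u' = i0 ∨ u' = i1 ∨ u' = i2 ∨ u' = i3)
    (hv' : v' = i0 ∨ v' = i1 ∨ v' = i2 ∨ v' = i3)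
    (hx : ((p u).1 - a) * ((p v).1 - a) < 0)
    (hy : ((p u').2 - t) * ((p v').2 - t) < 0) :
    ShareCorner r p i0 i1 i2 i3 := by
  have hcu : |(p u).1 - a| = r u := by rcases hu with rfl | rfl | rfl | rfl <;> tauto
  have hcv : |(p v).1 - a| = r v := by rcases hv with rfl | rfl | rfl | rfl <;> tauto
  have hcu' : |(p u').2 - t| = r u' := by rcases hu' with rfl | rfl | rfl | rfl <;> tauto
  have hcv' : |(p v').2 - t| = r v' := by rcases hv' with rfl | rfl | rfl | rfl <;> tauto
  have hmem : ∀ m : Fin n, |(p m).1 - a| = r m → |(p m).2 - t| = r m →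
      (a, t) ∈ homSq (r m) (p m) := by
    intro m h1 h2
    rw [mem_homSq (hr m)]
    constructor
    · rw [abs_sub_comm]
      show |(p m).1 - a| ≤ r m
      rw [h1]
    · rw [abs_sub_comm]
      show |(p m).2 - t| ≤ r m
      rw [h2]
  refine ⟨(a, t), ?_, ⟨by rw [abs_sub_comm]; exact hc0.1, by rw [abs_sub_comm]; exact hc0.2⟩,
    ⟨by rw [abs_sub_comm]; exact hc1.1, by rw [abs_sub_comm]; exact hc1.2⟩,
    ⟨by rw [abs_sub_comm]; exact hc2.1, by rw [abs_sub_comm]; exact hc2.2⟩,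
    ⟨by rw [abs_sub_comm]; exact hc3.1, by rw [abs_sub_comm]; exact hc3.2⟩⟩
  apply Set.eq_singleton_iff_unique_mem.2
  constructor
  · exact ⟨⟨⟨hmem i0 hc0.1 hc0.2, hmem i1 hc1.1 hc1.2⟩, hmem i2 hc2.1 hc2.2⟩,
      hmem i3 hc3.1 hc3.2⟩
  · rintro ⟨z1, z2⟩ ⟨⟨⟨m0, m1⟩, m2⟩, m3⟩
    rw [mem_homSq (hr _)] at m0 m1 m2 m3
    have mu : |z1 - (p u).1| ≤ r u := by
      rcases hu with rfl | rfl | rfl | rfl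
      exacts [m0.1, m1.1, m2.1, m3.1]
    have mv : |z1 - (p v).1| ≤ r v := by
      rcases hv with rfl | rfl | rfl | rfl
      exacts [m0.1, m1.1, m2.1, m3.1]
    have mu' : |z2 - (p u').2| ≤ r u' := by
      rcases hu' with rfl | rfl | rfl | rfl
      exacts [m0.2, m1.2, m2.2, m3.2]
    have mv' : |z2 - (p v').2| ≤ r v' := by
      rcases hv' with rfl | rfl | rfl | rfl
      exacts [m0.2, m1.2, m2.2, m3.2]
    obtain ⟨mu1, mu2⟩ := abs_le.1 mu
    obtain ⟨mv1, mv2⟩ := abs_le.1 mv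
    obtain ⟨mu1', mu2'⟩ := abs_le.1 mu'
    obtain ⟨mv1', mv2'⟩ := abs_le.1 mv'
    have hz1 : z1 = a := by
      rcases (abs_eq (hr u).le).1 hcu with e1 | e1 <;>
        rcases (abs_eq (hr v).le).1 hcv with e2 | e2
      · rw [e1, e2] at hx
        exact absurd hx (not_lt.2 (mul_pos (hr u) (hr v)).le)
      · linarith
      · linarith
      · rw [e1, e2, neg_mul_neg] at hx
        exact absurd hx (not_lt.2 (mul_pos (hr u) (hr v)).le)
    have hz2 : z2 = t := by
      rcases (abs_eq (hr u').le).1 hcu' with e1 | e1 <;>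
        rcases (abs_eq (hr v').le).1 hcv' with e2 | e2
      · rw [e1, e2] at hy
        exact absurd hy (not_lt.2 (mul_pos (hr u') (hr v')).le)
      · linarith
      · linarith
      · rw [e1, e2, neg_mul_neg] at hy
        exact absurd hy (not_lt.2 (mul_pos (hr u') (hr v')).le)
    rw [hz1, hz2]

/-- **Lemma 3.3.** Let `P` be a homothetic square packing whose radii satisfy the weak
generic condition. If `([n], E_x)` or `([n], E_y)` contains a cycle of length `k ≤ n - 2`,
then `k = 4` and the four squares of the cycle share a corner. -/
theorem short_cycle_shares_corner (n : ℕ) (r : Fin n → ℝ) (p : Fin n → ℝ × ℝ)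
    (hP : IsSqPacking r p) (hWG : WeakGeneric r)
    (k : ℕ) (hk : 3 ≤ k) (hkn : k ≤ n - 2) (c : ZMod k → Fin n)
    (hinj : Function.Injective c)
    (hcyc : (∀ i : ZMod k, XContact r p (c i) (c (i + 1))) ∨
            (∀ i : ZMod k, YContact r p (c i) (c (i + 1)))) :
    k = 4 ∧ ShareCorner r p (c 0) (c 1) (c 2) (c 3) := by
  obtain ⟨hrpos, hdisj⟩ := hP
  have hn : k + 2 ≤ n := by omega
  rcases hcyc with hX | hY
  · have hd : ∀ i j : Fin n, i ≠ j → |(p i).1 - (p j).1| < r i + r j →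
        r i + r j ≤ |(p i).2 - (p j).2| := by
      intro i j hij h
      rcases packing_sep r p hrpos hdisj i j hij with h' | h'
      · linarith
      · exact h'
    obtain ⟨hk4, a, t, hcor, hx01, hy02⟩ :=
      core_lemma n r (fun i => (p i).1) (fun i => (p i).2) hrpos hWG hd k hk hn c hinj
        (fun i => ⟨(hX i).2.1, (hX i).2.2⟩)
    exact ⟨hk4, assemble r p hrpos (c 0) (c 1) (c 2) (c 3) (c 0) (c 1) (c 0) (c 2) a t
      (hcor 0) (hcor 1) (hcor 2) (hcor 3)
      (Or.inl rfl) (Or.inr (Or.inl rfl)) (Or.inl rfl) (Or.inr (Or.inr (Or.inl rfl)))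
      hx01 hy02⟩
  · have hd : ∀ i j : Fin n, i ≠ j → |(p i).2 - (p j).2| < r i + r j →
        r i + r j ≤ |(p i).1 - (p j).1| := by
      intro i j hij h
      rcases packing_sep r p hrpos hdisj i j hij with h' | h'
      · exact h'
      · linarith
    obtain ⟨hk4, a, t, hcor, hx01, hy02⟩ :=
      core_lemma n r (fun i => (p i).2) (fun i => (p i).1) hrpos hWG hd k hk hn c hinj
        (fun i => ⟨(hY i).2.1, (hY i).2.2⟩)
    exact ⟨hk4, assemble r p hrpos (c 0) (c 1) (c 2) (c 3) (c 0) (c 2) (c 0) (c 1) t a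
      ⟨(hcor 0).2, (hcor 0).1⟩ ⟨(hcor 1).2, (hcor 1).1⟩ ⟨(hcor 2).2, (hcor 2).1⟩
      ⟨(hcor 3).2, (hcor 3).1⟩
      (Or.inl rfl) (Or.inr (Or.inr (Or.inl rfl))) (Or.inl rfl) (Or.inr (Or.inl rfl))
      hy02 hx01⟩
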